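/- For any p ∈ [1, ∞), any ε with 0 < ε ≤ 1, and any integer i ≥ 1: let t ∈ ℝ², let t₀ ∈ T be the nearest neighbor of t in T (i.e., ‖t − t₀‖ = min_{t'∈T} ‖t − t'‖), and assume ‖t − t₀‖ ≥ 2^{i−2} · optcost(t₀). Let t_τ ∈ ℝ² satisfy ‖t − t_τ‖ ≤ (2^{i−3} · ε/√2) · optcost(t₀), and let M_τ be a k-matching with cost(M_τ, t_τ) = optcost(t_τ). Then cost(M_τ, t) ≤ (1 + ε) · optcost(t). -/
import Mathlib


open scoped RealInnerProductSpace Classical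

noncomputable section

/-- Points in the Euclidean plane. -/
abbrev Pt : Type := EuclideanSpace ℝ (Fin 2)

/-- A `k`-matching between `A` and `B`: a set of `k` pairs in `A × B` such that
each point of `A` and each point of `B` occurs in at most one pair. -/
def IsMatching (A B : Finset Pt) (k : ℕ) (M : Finset (Pt × Pt)) : Prop :=
  M ⊆ A ×ˢ B ∧ M.card = k ∧
    (∀ e ∈ M, ∀ e' ∈ M, e.1 = e'.1 → e = e') ∧
    (∀ e ∈ M, ∀ e' ∈ M, e.2 = e'.2 → e = e')

/-- The `L_p`-cost of a matching `M` at translation `t`, for `p ∈ [1, ∞)`: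
`((1/k) · Σ_{(a,b) ∈ M} ‖a + t − b‖^p)^(1/p)`. -/
def cost (p : ℝ) (k : ℕ) (M : Finset (Pt × Pt)) (t : Pt) : ℝ :=
  ((1 / (k : ℝ)) * ∑ e ∈ M, ‖e.1 + t - e.2‖ ^ p) ^ (1 / p)

/-- The optimal cost at translation `t`: the minimum of `cost p k M t`
over all `k`-matchings `M` between `A` and `B`. -/
def optcost (A B : Finset Pt) (k : ℕ) (p : ℝ) (t : Pt) : ℝ :=
  sInf {c : ℝ | ∃ M : Finset (Pt × Pt), IsMatching A B k M ∧ c = cost p k M t}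

/-- The set of point-to-point translations `T = {b − a : a ∈ A, b ∈ B}`. -/
def ptpTranslations (A B : Finset Pt) : Set Pt :=
  {x : Pt | ∃ a ∈ A, ∃ b ∈ B, x = b - a}

lemma cost_nonneg (p : ℝ) (k : ℕ) (M : Finset (Pt × Pt)) (t : Pt) : 0 ≤ cost p k M t := by
  apply Real.rpow_nonneg
  exact mul_nonneg (by positivity)
    (Finset.sum_nonneg fun e _ => Real.rpow_nonneg (norm_nonneg _) _)

/-- Lipschitz property of the cost in the translation. -/
lemma cost_lipschitz (p : ℝ) (hp : 1 ≤ p) (k : ℕ) (hk : 0 < k)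
    (M : Finset (Pt × Pt)) (hM : M.card = k) (t t' : Pt) :
    cost p k M t ≤ cost p k M t' + ‖t - t'‖ := by
  have hp0 : 0 < p := lt_of_lt_of_le one_pos hp
  have hk0 : (0 : ℝ) < k := by exact_mod_cast hk
  have step1 : ∑ e ∈ M, ‖e.1 + t - e.2‖ ^ p ≤
      ∑ e ∈ M, (‖e.1 + t' - e.2‖ + ‖t - t'‖) ^ p := by
    refine Finset.sum_le_sum fun e _ => ?_
    refine Real.rpow_le_rpow (norm_nonneg _) ?_ hp0.le
    have : e.1 + t - e.2 = (e.1 + t' - e.2) + (t - t') := by abel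
    rw [this]
    exact norm_add_le _ _
  have mink := Real.Lp_add_le_of_nonneg (s := M) (f := fun e => ‖e.1 + t' - e.2‖)
    (g := fun _ => ‖t - t'‖) hp (fun _ _ => norm_nonneg _) (fun _ _ => norm_nonneg _)
  have hconst : (∑ _e ∈ M, ‖t - t'‖ ^ p) ^ (1 / p) = (k : ℝ) ^ (1 / p) * ‖t - t'‖ := by
    rw [Finset.sum_const, hM, nsmul_eq_mul,
      Real.mul_rpow (by positivity) (Real.rpow_nonneg (norm_nonneg _) _)]
    congr 1
    rw [← Real.rpow_mul (norm_nonneg _), mul_one_div, div_self hp0.ne', Real.rpow_one]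
  have hsum_nonneg : ∀ (s : Pt), 0 ≤ ∑ e ∈ M, ‖e.1 + s - e.2‖ ^ p := fun s =>
    Finset.sum_nonneg fun e _ => Real.rpow_nonneg (norm_nonneg _) _
  have hsum2_nonneg : 0 ≤ ∑ e ∈ M, (‖e.1 + t' - e.2‖ + ‖t - t'‖) ^ p :=
    Finset.sum_nonneg fun e _ => Real.rpow_nonneg (by positivity) _
  have h1 : cost p k M t ≤ ((1 / (k : ℝ)) * ∑ e ∈ M, (‖e.1 + t' - e.2‖ + ‖t - t'‖) ^ p) ^ (1 / p) := by
    unfold cost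
    exact Real.rpow_le_rpow (mul_nonneg (by positivity) (hsum_nonneg t))
      (by gcongr) (by positivity)
  refine h1.trans ?_
  rw [Real.mul_rpow (by positivity) hsum2_nonneg]
  have h2 : ((1 / (k : ℝ)) : ℝ) ^ (1 / p) * (∑ e ∈ M, (‖e.1 + t' - e.2‖ + ‖t - t'‖) ^ p) ^ (1 / p)
      ≤ ((1 / (k : ℝ)) : ℝ) ^ (1 / p) *
        ((∑ e ∈ M, ‖e.1 + t' - e.2‖ ^ p) ^ (1 / p) + (∑ _e ∈ M, ‖t - t'‖ ^ p) ^ (1 / p)) := by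
    exact mul_le_mul_of_nonneg_left mink (by positivity)
  refine h2.trans ?_
  have hkk : ((1 / (k : ℝ)) : ℝ) ^ (1 / p) * (k : ℝ) ^ (1 / p) = 1 := by
    rw [← Real.mul_rpow (by positivity) (by positivity), one_div_mul_cancel hk0.ne',
      Real.one_rpow]
  have hcost' : ((1 / (k : ℝ)) : ℝ) ^ (1 / p) * (∑ e ∈ M, ‖e.1 + t' - e.2‖ ^ p) ^ (1 / p)
      = cost p k M t' := by
    rw [cost, Real.mul_rpow (by positivity) (hsum_nonneg t')]
  rw [hconst, mul_add, ← mul_assoc, hkk, one_mul, hcost']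

/-- Lower bound on the cost of any matching by the nearest-neighbor distance. -/
lemma cost_lower (A B : Finset Pt) (k : ℕ) (hk : 0 < k) (p : ℝ) (hp : 1 ≤ p)
    (t t₀ : Pt) (hnn : ∀ t' ∈ ptpTranslations A B, ‖t - t₀‖ ≤ ‖t - t'‖)
    (M : Finset (Pt × Pt)) (hM : IsMatching A B k M) :
    ‖t - t₀‖ ≤ cost p k M t := by
  have hp0 : 0 < p := lt_of_lt_of_le one_pos hp
  have hk0 : (0 : ℝ) < k := by exact_mod_cast hk
  have key : ∀ e ∈ M, ‖t - t₀‖ ^ p ≤ ‖e.1 + t - e.2‖ ^ p := by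
    intro e he
    refine Real.rpow_le_rpow (norm_nonneg _) ?_ hp0.le
    have hmem : e ∈ A ×ˢ B := hM.1 he
    rw [Finset.mem_product] at hmem
    have hT : e.2 - e.1 ∈ ptpTranslations A B := ⟨e.1, hmem.1, e.2, hmem.2, rfl⟩
    have := hnn _ hT
    have heq : t - (e.2 - e.1) = e.1 + t - e.2 := by abel
    rwa [heq] at this
  have hsum : (k : ℝ) * ‖t - t₀‖ ^ p ≤ ∑ e ∈ M, ‖e.1 + t - e.2‖ ^ p := by
    calc (k : ℝ) * ‖t - t₀‖ ^ p = ∑ _e ∈ M, ‖t - t₀‖ ^ p := by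
          rw [Finset.sum_const, hM.2.1, nsmul_eq_mul]
      _ ≤ _ := Finset.sum_le_sum key
  have : ‖t - t₀‖ = ((1 / (k : ℝ)) * ((k : ℝ) * ‖t - t₀‖ ^ p)) ^ (1 / p) := by
    rw [← mul_assoc, one_div_mul_cancel hk0.ne', one_mul,
      ← Real.rpow_mul (norm_nonneg _), mul_one_div, div_self hp0.ne', Real.rpow_one]
  rw [this, cost]
  exact Real.rpow_le_rpow (by positivity) (by gcongr) (by positivity)

lemma exists_matching (A B : Finset Pt) (k : ℕ) (hkA : k ≤ A.card) (hkB : k ≤ B.card) :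
    ∃ M, IsMatching A B k M := by
  obtain ⟨A', hA'sub, hA'card⟩ := Finset.exists_subset_card_eq hkA
  obtain ⟨B', hB'sub, hB'card⟩ := Finset.exists_subset_card_eq hkB
  have hcard : Fintype.card A' = Fintype.card B' := by
    simp [Fintype.card_coe, hA'card, hB'card]
  let e : {x // x ∈ A'} ≃ {x // x ∈ B'} := Fintype.equivOfCardEq hcard
  have hinj : Function.Injective (fun (a : {x // x ∈ A'}) => (((a : Pt), ((e a : Pt))) : Pt × Pt)) := by
    intro a b hab
    exact Subtype.ext (congrArg Prod.fst hab)
  refine ⟨A'.attach.image (fun (a : {x // x ∈ A'}) => (((a : Pt), ((e a : Pt))) : Pt × Pt)),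
    ?_, ?_, ?_, ?_⟩
  · intro x hx
    simp only [Finset.mem_image, Finset.mem_attach, true_and] at hx
    obtain ⟨a, rfl⟩ := hx
    exact Finset.mem_product.2 ⟨hA'sub a.2, hB'sub (e a).2⟩
  · rw [Finset.card_image_of_injective _ hinj, Finset.card_attach, hA'card]
  · intro x hx y hy hxy
    simp only [Finset.mem_image, Finset.mem_attach, true_and] at hx hy
    obtain ⟨a, rfl⟩ := hx
    obtain ⟨b, rfl⟩ := hy
    have : a = b := Subtype.ext hxy
    rw [this]
  · intro x hx y hy hxy
    simp only [Finset.mem_image, Finset.mem_attach, true_and] at hx hy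
    obtain ⟨a, rfl⟩ := hx
    obtain ⟨b, rfl⟩ := hy
    have : e a = e b := Subtype.ext hxy
    have : a = b := e.injective this
    rw [this]

lemma costSet_finite (A B : Finset Pt) (k : ℕ) (p : ℝ) (t : Pt) :
    {c : ℝ | ∃ M, IsMatching A B k M ∧ c = cost p k M t}.Finite := by
  apply Set.Finite.subset
    (Finset.finite_toSet (((A ×ˢ B).powerset).image (fun M => cost p k M t)))
  rintro c ⟨M, hM, rfl⟩
  simp only [Finset.coe_image, Set.mem_image, Finset.mem_coe, Finset.mem_powerset]
  exact ⟨M, hM.1, rfl⟩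

lemma optcost_le (A B : Finset Pt) (k : ℕ) (p : ℝ) (t : Pt)
    (M : Finset (Pt × Pt)) (hM : IsMatching A B k M) :
    optcost A B k p t ≤ cost p k M t :=
  csInf_le (Set.Finite.bddBelow (costSet_finite A B k p t)) ⟨M, hM, rfl⟩

lemma optcost_attained (A B : Finset Pt) (k : ℕ) (hkA : k ≤ A.card) (hkB : k ≤ B.card)
    (p : ℝ) (t : Pt) :
    ∃ M, IsMatching A B k M ∧ optcost A B k p t = cost p k M t := by
  obtain ⟨M, hM⟩ := exists_matching A B k hkA hkB
  have hne : {c : ℝ | ∃ M, IsMatching A B k M ∧ c = cost p k M t}.Nonempty :=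
    ⟨cost p k M t, M, hM, rfl⟩
  exact hne.csInf_mem (costSet_finite A B k p t)

theorem grid_cell_matching_approx_ring (A B : Finset Pt) (k : ℕ) (hk : 0 < k)
    (hkA : k ≤ A.card) (hkB : k ≤ B.card)
    (p : ℝ) (hp : 1 ≤ p) (ε : ℝ) (hε0 : 0 < ε) (hε1 : ε ≤ 1)
    (i : ℕ) (hi : 1 ≤ i) (t t₀ tτ : Pt) (ht₀ : t₀ ∈ ptpTranslations A B)
    (hnn : ∀ t' ∈ ptpTranslations A B, ‖t - t₀‖ ≤ ‖t - t'‖)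
    (hfar : (2 : ℝ) ^ ((i : ℤ) - 2) * optcost A B k p t₀ ≤ ‖t - t₀‖)
    (hτ : ‖t - tτ‖ ≤ (2 : ℝ) ^ ((i : ℤ) - 3) * ε / Real.sqrt 2 * optcost A B k p t₀)
    (Mτ : Finset (Pt × Pt)) (hMτ : IsMatching A B k Mτ)
    (hopt : cost p k Mτ tτ = optcost A B k p tτ) :
    cost p k Mτ t ≤ (1 + ε) * optcost A B k p t := by
  obtain ⟨Ms, hMs, hMscost⟩ := optcost_attained A B k hkA hkB p t
  -- optcost t ≥ ‖t - t₀‖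
  have hlow : ‖t - t₀‖ ≤ optcost A B k p t := by
    rw [hMscost]
    exact cost_lower A B k hk p hp t t₀ hnn Ms hMs
  -- optcost tτ ≤ optcost t + ‖t - tτ‖
  have h1 : optcost A B k p tτ ≤ optcost A B k p t + ‖t - tτ‖ := by
    have := optcost_le A B k p tτ Ms hMs
    have h2 := cost_lipschitz p hp k hk Ms hMs.2.1 tτ t
    rw [norm_sub_rev t tτ, hMscost]
    linarith
  -- cost Mτ t ≤ optcost t + 2‖t - tτ‖
  have h3 : cost p k Mτ t ≤ optcost A B k p t + 2 * ‖t - tτ‖ := by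
    have h4 := cost_lipschitz p hp k hk Mτ hMτ.2.1 t tτ
    rw [hopt] at h4
    linarith
  -- bound 2‖t - tτ‖ ≤ ε * optcost t
  have hopt₀ : 0 ≤ optcost A B k p t₀ := by
    obtain ⟨M0, hM0, h⟩ := optcost_attained A B k hkA hkB p t₀
    rw [h]; exact cost_nonneg _ _ _ _
  have hsqrt : (1 : ℝ) ≤ Real.sqrt 2 := by
    rw [show (1:ℝ) = Real.sqrt 1 by simp]
    exact Real.sqrt_le_sqrt (by norm_num)
  have hsqrtpos : (0 : ℝ) < Real.sqrt 2 := lt_of_lt_of_le one_pos hsqrt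
  have hkey : 2 * ‖t - tτ‖ ≤ ε * optcost A B k p t := by
    have e1 : 2 * ‖t - tτ‖ ≤ 2 * ((2 : ℝ) ^ ((i : ℤ) - 3) * ε / Real.sqrt 2 * optcost A B k p t₀) := by
      linarith
    have e2 : 2 * ((2 : ℝ) ^ ((i : ℤ) - 3) * ε / Real.sqrt 2 * optcost A B k p t₀)
        = ε / Real.sqrt 2 * ((2 : ℝ) ^ ((i : ℤ) - 2) * optcost A B k p t₀) := by
      have hpow : (2 : ℝ) ^ ((i : ℤ) - 2) = 2 * (2 : ℝ) ^ ((i : ℤ) - 3) := by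
        rw [show (i : ℤ) - 2 = ((i : ℤ) - 3) + 1 by ring,
          zpow_add_one₀ (by norm_num : (2:ℝ) ≠ 0)]
        ring
      rw [hpow]
      ring
    have e3 : ε / Real.sqrt 2 * ((2 : ℝ) ^ ((i : ℤ) - 2) * optcost A B k p t₀)
        ≤ ε / Real.sqrt 2 * ‖t - t₀‖ := by
      apply mul_le_mul_of_nonneg_left hfar (by positivity)
    have e4 : ε / Real.sqrt 2 * ‖t - t₀‖ ≤ ε / Real.sqrt 2 * optcost A B k p t := by
      apply mul_le_mul_of_nonneg_left hlow (by positivity)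
    have e5 : ε / Real.sqrt 2 * optcost A B k p t ≤ ε * optcost A B k p t := by
      apply mul_le_mul_of_nonneg_right _ (le_trans (norm_nonneg _) hlow)
      rw [div_le_iff₀ hsqrtpos]
      nlinarith
    linarith
  linarith
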